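/- arXiv:2104.14448 — 2 statements merged into one kernel-verified Lean document; each statement's English description precedes it below -/
import Mathlib

section
/- Let λ : [0,∞) → [0,1] be smooth with {λ > 0} = [0,1) and λ ≡ 1 near 0. Then for every R > 0 there exist constants C > 0 and ε > 0 such that the complex Hessian of S(z₁,z') := λ(|z₁|²)·|z'|² + C·|z₁|² satisfies H_S(z,ξ) ≥ ε·(|ξ₁|² + λ(|z₁|²)·|ξ'|²) for all z ∈ ℂ × B(0,R) and all ξ = (ξ₁,ξ') ∈ ℂ × ℂ^{n-1}. In particular, S is strictly plurisubharmonic on 𝔻 × B(0,R). -/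
open Complex Metric MeasureTheory Real Set

/-- The average of `f` over the circle of radius `r` centered at `z`. -/
noncomputable def cAvg (f : ℂ → ℝ) (z : ℂ) (r : ℝ) : ℝ :=
  (2 * Real.pi)⁻¹ * ∫ θ in (0:ℝ)..(2 * Real.pi), f (z + (r : ℂ) * Complex.exp (θ * Complex.I))

/-- Sub-mean value property of `f` at `z` with respect to circles whose closed discs lie in `U`. -/
def SubmeanAt (f : ℂ → ℝ) (U : Set ℂ) (z : ℂ) : Prop :=
  ∀ r : ℝ, 0 < r → closedBall z r ⊆ U → f z ≤ cAvg f z r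

/-- A real-valued function is subharmonic on `U` if it is upper semicontinuous on `U` and
satisfies the sub-mean value inequality there. -/
def SubharmonicOn (f : ℂ → ℝ) (U : Set ℂ) : Prop :=
  UpperSemicontinuousOn f U ∧ ∀ z ∈ U, SubmeanAt f U z

/-- A `[-∞,∞)`-valued function is subharmonic on `U` if it is upper semicontinuous on `U`,
nowhere `+∞`, not identically `-∞`, and all of its truncations `max (f ·) (-n)` satisfy the
sub-mean value inequality on `U`. -/
def SubharmonicOnE (f : ℂ → EReal) (U : Set ℂ) : Prop :=
  UpperSemicontinuousOn f U ∧ (∀ z ∈ U, f z < ⊤) ∧ (∃ z ∈ U, f z ≠ ⊥) ∧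
  ∀ n : ℕ, ∀ z ∈ U, SubmeanAt (fun w => (max (f w) ((-(n:ℝ) : ℝ) : EReal)).toReal) U z

/-- A real-valued function on a complex normed space is plurisubharmonic on `U` if it is upper
semicontinuous on `U` and satisfies the sub-mean value inequality along every complex line. -/
def PshOn {E : Type*} [NormedAddCommGroup E] [NormedSpace ℂ E]
    (f : E → ℝ) (U : Set E) : Prop :=
  UpperSemicontinuousOn f U ∧
  ∀ z ∈ U, ∀ v : E, ∀ r : ℝ, 0 < r → (∀ t : ℂ, ‖t‖ ≤ r → z + t • v ∈ U) →
    f z ≤ (2 * Real.pi)⁻¹ *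
      ∫ θ in (0:ℝ)..(2 * Real.pi), f (z + ((r : ℂ) * Complex.exp (θ * Complex.I)) • v)

/-- Strict plurisubharmonicity on `U` (in the sense of Harz–Shcherbina–Tomassini): every small
perturbation by a smooth compactly supported function stays plurisubharmonic. -/
def StrictPshOn {E : Type*} [NormedAddCommGroup E] [NormedSpace ℝ E] [NormedSpace ℂ E]
    (f : E → ℝ) (U : Set E) : Prop :=
  ∀ g : E → ℝ, ContDiff ℝ (⊤ : ℕ∞) g → HasCompactSupport g → tsupport g ⊆ U →
    ∃ ε₀ : ℝ, 0 < ε₀ ∧ ∀ ε : ℝ, |ε| < ε₀ → PshOn (fun z => f z + ε * g z) U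

/-- `f` is strictly plurisubharmonic near `z`. -/
def StrictPshNear {E : Type*} [NormedAddCommGroup E] [NormedSpace ℝ E] [NormedSpace ℂ E]
    (f : E → ℝ) (z : E) : Prop :=
  ∃ V : Set E, IsOpen V ∧ z ∈ V ∧ StrictPshOn f V

/-- The core of `Ω` with respect to `C^k`-smooth plurisubharmonic functions that are bounded
from above. -/
def pshCore {E : Type*} [NormedAddCommGroup E] [NormedSpace ℝ E] [NormedSpace ℂ E]
    (k : ℕ∞) (Ω : Set E) : Set E :=
  {z ∈ Ω | ∀ f : E → ℝ, PshOn f Ω → ContDiffOn ℝ k f Ω →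
     (∃ M : ℝ, ∀ w ∈ Ω, f w ≤ M) → ¬ StrictPshNear f z}

/-- `Ω` is pseudoconvex: it is open and admits a plurisubharmonic exhaustion function. -/
def Pseudoconvex {E : Type*} [NormedAddCommGroup E] [NormedSpace ℂ E] (Ω : Set E) : Prop :=
  IsOpen Ω ∧ ∃ f : E → ℝ, PshOn f Ω ∧
    ∀ c : ℝ, ∃ K : Set E, IsCompact K ∧ K ⊆ Ω ∧ {z ∈ Ω | f z ≤ c} ⊆ K

/-- The Levi form (complex Hessian) of `S` at `z` in direction `ξ`, computed as one quarter of
the Laplacian at `t = 0` of `t ↦ S (z + t • ξ)`. -/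
noncomputable def leviForm {E : Type*} [NormedAddCommGroup E] [NormedSpace ℂ E]
    (S : E → ℝ) (z ξ : E) : ℝ :=
  (1/4) * (deriv (fun x : ℝ => deriv (fun x' : ℝ => S (z + ((x' : ℂ)) • ξ)) x) 0
    + deriv (fun y : ℝ => deriv (fun y' : ℝ => S (z + ((y' : ℂ) * Complex.I) • ξ)) y) 0)


/-!
Extending `λ` by `1` to the left of `0` gives a smooth `L ≥ 0` on `ℝ` with `L'` supported in
`[0, 1]`. Differentiating along the real lines `t ↦ z + tξ` and `t ↦ z + itξ`,
`H_S(z, ξ) = L''(|z₁|²) |⟨z₁, ξ₁⟩|² |z'|² + L'(|z₁|²) (|ξ₁|² |z'|² + 2 Re (⟨ξ₁, z₁⟩ ⟨z', ξ'⟩))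
  + L(|z₁|²) |ξ'|² + C |ξ₁|²`.
All terms but the mixed one and `L |ξ'|²` are `O(R² |ξ₁|²)`. For the mixed one, Glaeser's inequality
`L'² ≤ 4 sup |L''| · L` (from `L ≥ 0` and Taylor's formula) together with AM–GM bounds it by
`L |ξ'|² / 2 + O(R² |ξ₁|²)`, so a large `C` makes `H_S ≥ (|ξ₁|² + L |ξ'|²) / 2`.
-/

open Function Filter Topology

open scoped InnerProductSpace

lemma deriv_deriv_eq_of_hasDerivAt {f f' : ℝ → ℝ} {a b : ℝ} (hf : ∀ x, HasDerivAt f (f' x) x)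
    (hf' : HasDerivAt f' b a) : deriv (deriv f) a = b := by
  rw [show deriv f = f' from funext fun x => (hf x).deriv]
  exact hf'.deriv

lemma hasDerivAt_quadratic (A B D x : ℝ) :
    HasDerivAt (fun x : ℝ => A + B * x + D * x ^ 2) (B + 2 * D * x) x :=
  (((hasDerivAt_id x).const_mul B).const_add A |>.add
    ((hasDerivAt_pow 2 x).const_mul D)).congr_deriv (by
      simp only [mul_one, Nat.cast_ofNat, Nat.add_one_sub_one, pow_one]; ring)

lemma deriv_deriv_comp_quadratic_mul_quadratic {L : ℝ → ℝ} (hL : ContDiff ℝ 2 L)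
    (A B D E F G C : ℝ) :
    deriv (deriv fun x : ℝ =>
        L (A + B * x + D * x ^ 2) * (E + F * x + G * x ^ 2) + C * (A + B * x + D * x ^ 2)) 0 =
      deriv (deriv L) A * B ^ 2 * E + deriv L A * (2 * D * E + 2 * B * F) + 2 * L A * G
        + 2 * C * D := by
  have hL₁ : Differentiable ℝ L := hL.differentiable two_ne_zero
  have hL₂ : Differentiable ℝ (deriv L) :=
    (hL.iterate_deriv' 1 1).differentiable one_ne_zero
  have hlin (P Q x : ℝ) : HasDerivAt (fun x : ℝ => P + Q * x) Q x := by
    simpa using ((hasDerivAt_id x).const_mul Q).const_add P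
  refine deriv_deriv_eq_of_hasDerivAt (f' := fun x => deriv L (A + B * x + D * x ^ 2) *
    (B + 2 * D * x) * (E + F * x + G * x ^ 2) + L (A + B * x + D * x ^ 2) * (F + 2 * G * x)
      + C * (B + 2 * D * x)) (fun x => ?_) ?_
  · exact (((hL₁ _).hasDerivAt.comp x (hasDerivAt_quadratic A B D x)).mul
      (hasDerivAt_quadratic E F G x)).add ((hasDerivAt_quadratic A B D x).const_mul C)
  · refine ((((hL₂ _).hasDerivAt.comp 0 (hasDerivAt_quadratic A B D 0)).mul
      (hlin B (2 * D) 0)).mul (hasDerivAt_quadratic E F G 0) |>.add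
      (((hL₁ _).hasDerivAt.comp 0 (hasDerivAt_quadratic A B D 0)).mul (hlin F (2 * G) 0))).add
      ((hlin B (2 * D) 0).const_mul C) |>.congr_deriv ?_
    simp only [Function.comp, Pi.mul_apply, mul_zero, add_zero, zero_pow two_ne_zero]
    ring

lemma abs_sub_sub_mul_deriv_le {f : ℝ → ℝ} {K : ℝ} (hf : Differentiable ℝ f)
    (hf' : Differentiable ℝ (deriv f)) (hK : ∀ t, |deriv (deriv f) t| ≤ K) (a h : ℝ) :
    |f (a + h) - f a - h * deriv f a| ≤ K * h ^ 2 := by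
  set g : ℝ → ℝ := fun x => f x - x * deriv f a
  have hg (x : ℝ) : HasDerivAt g (deriv f x - deriv f a) x :=
    (hf x).hasDerivAt.sub (by simpa using (hasDerivAt_id x).mul_const (deriv f a))
  have hg' : ∀ x ∈ uIcc a (a + h), ‖deriv g x‖ ≤ K * |h| := fun x hx => by
    rw [(hg x).deriv]
    calc ‖deriv f x - deriv f a‖ ≤ K * ‖x - a‖ :=
          convex_univ.norm_image_sub_le_of_norm_deriv_le (fun y _ => hf' y) (fun y _ => hK y)
            (mem_univ a) (mem_univ x)
      _ ≤ K * |h| := by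
          have := abs_sub_left_of_mem_uIcc hx
          simp only [add_sub_cancel_left] at this
          exact mul_le_mul_of_nonneg_left this ((abs_nonneg _).trans (hK 0))
  have := (convex_uIcc a (a + h)).norm_image_sub_le_of_norm_deriv_le
    (fun x _ => (hg x).differentiableAt) hg' left_mem_uIcc right_mem_uIcc
  calc |f (a + h) - f a - h * deriv f a| = ‖g (a + h) - g a‖ := by
        rw [Real.norm_eq_abs]; congr 1; ring
    _ ≤ K * |h| * ‖a + h - a‖ := this
    _ = K * h ^ 2 := by simp [mul_assoc, ← sq]

lemma sq_deriv_le_of_nonneg {f : ℝ → ℝ} {K : ℝ} (hf : Differentiable ℝ f)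
    (hf' : Differentiable ℝ (deriv f)) (hK : ∀ t, |deriv (deriv f) t| ≤ K)
    (hnn : ∀ t, 0 ≤ f t) (a : ℝ) : deriv f a ^ 2 ≤ 4 * K * f a := by
  have := discrim_le_zero (a := K) (b := deriv f a) (c := f a) fun h => by
    have := (abs_le.1 (abs_sub_sub_mul_deriv_le hf hf' hK a h)).2
    nlinarith [hnn (a + h)]
  rw [discrim] at this
  linarith

lemma neg_half_add_le_of_sq_le_mul {x a b : ℝ} (ha : 0 ≤ a) (hb : 0 ≤ b) (h : x ^ 2 ≤ a * b) :
    -((a + b) / 2) ≤ x := by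
  nlinarith [sq_nonneg (a - b), sq_nonneg (2 * x + a + b)]

lemma leviForm_terms_lower_bound {K M R A D E G a c L₀ L₁ L₂ : ℝ} (hA : 0 ≤ A) (hD : 0 ≤ D)
    (hE : 0 ≤ E) (hER : E ≤ R ^ 2) (hG : 0 ≤ G) (ha : 0 ≤ a) (haA : a ≤ A * D)
    (hc : c ^ 2 ≤ A * D * (E * G)) (hL₀ : 0 ≤ L₀) (hL₁ : |L₁| ≤ M) (hL₂ : |L₂| * A ≤ K)
    (hL₁L₀ : L₁ ^ 2 * A ≤ 4 * K * L₀) :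
    (1 / 2) * (D + L₀ * G) ≤
      L₂ * a * E + L₁ * (D * E + 2 * c) + L₀ * G + ((M + 9 * K) * R ^ 2 + 1) * D := by
  have hK : 0 ≤ K := (mul_nonneg (abs_nonneg _) hA).trans hL₂
  have hterm₂ : -(K * R ^ 2 * D) ≤ L₂ * a * E := by
    have : |L₂ * a * E| ≤ K * R ^ 2 * D := by
      rw [abs_mul, abs_mul, abs_of_nonneg ha, abs_of_nonneg hE]
      calc |L₂| * a * E ≤ |L₂| * (A * D) * E := by gcongr
        _ = |L₂| * A * (D * E) := by ring
        _ ≤ K * (D * R ^ 2) := by gcongr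
        _ = K * R ^ 2 * D := by ring
    linarith [neg_abs_le (L₂ * a * E)]
  have hterm₁ : -(M * R ^ 2 * D) ≤ L₁ * (D * E) := by
    have : |L₁ * (D * E)| ≤ M * R ^ 2 * D := by
      rw [abs_mul, abs_of_nonneg (mul_nonneg hD hE)]
      calc |L₁| * (D * E) ≤ M * (D * R ^ 2) := by gcongr; exact (abs_nonneg _).trans hL₁
        _ = M * R ^ 2 * D := by ring
    linarith [neg_abs_le (L₁ * (D * E))]
  have hmixed : -(8 * K * R ^ 2 * D + L₀ * G / 2) ≤ L₁ * (2 * c) := by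
    have hsq : (L₁ * (2 * c)) ^ 2 ≤ (16 * K * R ^ 2 * D) * (L₀ * G) :=
      calc (L₁ * (2 * c)) ^ 2 = 4 * L₁ ^ 2 * c ^ 2 := by ring
        _ ≤ 4 * L₁ ^ 2 * (A * D * (E * G)) := by gcongr
        _ = 4 * (L₁ ^ 2 * A) * (D * E * G) := by ring
        _ ≤ 4 * (4 * K * L₀) * (D * R ^ 2 * G) := by gcongr
        _ = (16 * K * R ^ 2 * D) * (L₀ * G) := by ring
    linarith [neg_half_add_le_of_sq_le_mul (by positivity) (mul_nonneg hL₀ hG) hsq]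
  nlinarith [mul_nonneg hL₀ hG]

lemma abs_mul_le_abs_of_support_subset_Icc {g : ℝ → ℝ} (hg : support g ⊆ Icc 0 1) (t : ℝ) :
    |g t| * t ≤ |g t| := by
  by_cases ht₁ : t ≤ 1
  · exact mul_le_of_le_one_right (abs_nonneg _) ht₁
  · rw [notMem_support.1 fun h => ht₁ (hg h).2, abs_zero, zero_mul]

lemma exists_smooth_extension {n : WithTop ℕ∞} {l : ℝ → ℝ} (hl : ContDiffOn ℝ n l (Ici 0))
    (hl₀ : ∀ t, 0 ≤ t → 0 ≤ l t) (hl₁ : ∀ t, 1 ≤ t → l t = 0) {δ : ℝ} (hδ : 0 < δ)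
    (hone : ∀ t ∈ Ico 0 δ, l t = 1) :
    ∃ L : ℝ → ℝ, ContDiff ℝ n L ∧ (∀ t, 0 ≤ t → L t = l t) ∧ (∀ t, 0 ≤ L t) ∧
      support (deriv L) ⊆ Icc 0 1 := by
  set L : ℝ → ℝ := fun t => l (max t 0)
  have hL_of_lt {t : ℝ} (ht : t < δ) : L =ᶠ[𝓝 t] fun _ => 1 :=
    eventually_of_mem (Iio_mem_nhds ht) fun s hs => hone _ ⟨le_max_right _ _, max_lt hs hδ⟩
  have hL_of_pos {t : ℝ} (ht : 0 < t) : L =ᶠ[𝓝 t] l :=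
    eventually_of_mem (Ioi_mem_nhds ht) fun s hs => by simp only [L, max_eq_left (mem_Ioi.1 hs).le]
  refine ⟨L, contDiff_iff_contDiffAt.2 fun t => ?_, fun t ht => by simp only [L, max_eq_left ht],
    fun t => hl₀ _ (le_max_right _ _), fun t ht => ?_⟩
  · rcases lt_or_ge t δ with ht | ht
    · exact contDiffAt_const.congr_of_eventuallyEq (hL_of_lt ht)
    · exact (hl.contDiffAt (Ici_mem_nhds (hδ.trans_le ht))).congr_of_eventuallyEq
        (hL_of_pos (hδ.trans_le ht))
  · by_contra hmem
    refine ht ?_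
    rcases not_and_or.1 hmem with ht₀ | ht₁
    · rw [(hL_of_lt ((not_le.1 ht₀).trans hδ)).deriv_eq, deriv_const]
    · have : L =ᶠ[𝓝 t] fun _ => 0 := (hL_of_pos (zero_lt_one.trans (not_le.1 ht₁))).trans
        (eventually_of_mem (Ioi_mem_nhds (not_le.1 ht₁)) fun s hs => hl₁ s (mem_Ioi.1 hs).le)
      rw [this.deriv_eq, deriv_const]

section LeviForm

variable {E F : Type*} [NormedAddCommGroup E] [InnerProductSpace ℂ E]
  [NormedAddCommGroup F] [InnerProductSpace ℂ F]

lemma norm_add_ofReal_smul_sq (u v : E) (x : ℝ) :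
    ‖u + (x : ℂ) • v‖ ^ 2 = ‖u‖ ^ 2 + 2 * re ⟪u, v⟫_ℂ * x + ‖v‖ ^ 2 * x ^ 2 := by
  rw [@norm_add_sq ℂ, inner_smul_right, norm_smul, mul_pow, Complex.norm_real, Real.norm_eq_abs,
    sq_abs, RCLike.re_to_complex, re_ofReal_mul]
  ring

lemma leviForm_eq_add {G : Type*} [NormedAddCommGroup G] [NormedSpace ℂ G] (S : G → ℝ)
    (z ξ : G) :
    leviForm S z ξ = (1 / 4) * (deriv (deriv fun x : ℝ => S (z + (x : ℂ) • ξ)) 0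
      + deriv (deriv fun x : ℝ => S (z + (x : ℂ) • (I • ξ))) 0) := by
  simp only [leviForm, mul_smul]

lemma deriv_deriv_line {L : ℝ → ℝ} (hL : ContDiff ℝ 2 L) (C : ℝ) (z v : E × F) :
    deriv (deriv fun x : ℝ => L (‖(z + (x : ℂ) • v).1‖ ^ 2) * ‖(z + (x : ℂ) • v).2‖ ^ 2
        + C * ‖(z + (x : ℂ) • v).1‖ ^ 2) 0 =
      deriv (deriv L) (‖z.1‖ ^ 2) * (2 * re ⟪z.1, v.1⟫_ℂ) ^ 2 * ‖z.2‖ ^ 2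
        + deriv L (‖z.1‖ ^ 2) * (2 * ‖v.1‖ ^ 2 * ‖z.2‖ ^ 2
          + 2 * (2 * re ⟪z.1, v.1⟫_ℂ) * (2 * re ⟪z.2, v.2⟫_ℂ))
        + 2 * L (‖z.1‖ ^ 2) * ‖v.2‖ ^ 2 + 2 * C * ‖v.1‖ ^ 2 := by
  simp only [Prod.fst_add, Prod.snd_add, Prod.smul_fst, Prod.smul_snd, norm_add_ofReal_smul_sq]
  exact deriv_deriv_comp_quadratic_mul_quadratic hL _ _ _ _ _ _ _

lemma leviForm_eq {L : ℝ → ℝ} (hL : ContDiff ℝ 2 L) (C : ℝ) (z ξ : E × F) :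
    leviForm (fun p => L (‖p.1‖ ^ 2) * ‖p.2‖ ^ 2 + C * ‖p.1‖ ^ 2) z ξ =
      deriv (deriv L) (‖z.1‖ ^ 2) * ‖⟪z.1, ξ.1⟫_ℂ‖ ^ 2 * ‖z.2‖ ^ 2
        + deriv L (‖z.1‖ ^ 2) * (‖ξ.1‖ ^ 2 * ‖z.2‖ ^ 2 + 2 * re (⟪ξ.1, z.1⟫_ℂ * ⟪z.2, ξ.2⟫_ℂ))
        + L (‖z.1‖ ^ 2) * ‖ξ.2‖ ^ 2 + C * ‖ξ.1‖ ^ 2 := by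
  rw [leviForm_eq_add, deriv_deriv_line hL, deriv_deriv_line hL]
  simp only [Prod.smul_fst, Prod.smul_snd, inner_smul_right, norm_smul, Complex.norm_I, one_mul,
    I_re, I_im, ← inner_conj_symm z.1 ξ.1, Complex.sq_norm, normSq_apply, mul_re, conj_re, conj_im]
  ring


lemma sq_re_inner_mul_inner_le (u v : E) (x y : F) :
    re (⟪v, u⟫_ℂ * ⟪x, y⟫_ℂ) ^ 2 ≤ ‖u‖ ^ 2 * ‖v‖ ^ 2 * (‖x‖ ^ 2 * ‖y‖ ^ 2) :=
  calc re (⟪v, u⟫_ℂ * ⟪x, y⟫_ℂ) ^ 2 = |re (⟪v, u⟫_ℂ * ⟪x, y⟫_ℂ)| ^ 2 := (sq_abs _).symm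
    _ ≤ (‖⟪v, u⟫_ℂ‖ * ‖⟪x, y⟫_ℂ‖) ^ 2 := by
      gcongr; exact (abs_re_le_norm _).trans_eq (norm_mul _ _)
    _ ≤ (‖v‖ * ‖u‖ * (‖x‖ * ‖y‖)) ^ 2 := by gcongr <;> exact norm_inner_le_norm _ _
    _ = ‖u‖ ^ 2 * ‖v‖ ^ 2 * (‖x‖ ^ 2 * ‖y‖ ^ 2) := by ring

theorem exists_leviForm_lower_bound {L : ℝ → ℝ} (hL : ContDiff ℝ 2 L) (hL₀ : ∀ t, 0 ≤ L t)
    (hL₁ : support (deriv L) ⊆ Icc 0 1) (R : ℝ) :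
    ∃ C, 0 < C ∧ ∀ z ξ : E × F, ‖z.2‖ ≤ R →
      (1 / 2) * (‖ξ.1‖ ^ 2 + L (‖z.1‖ ^ 2) * ‖ξ.2‖ ^ 2) ≤
        leviForm (fun p => L (‖p.1‖ ^ 2) * ‖p.2‖ ^ 2 + C * ‖p.1‖ ^ 2) z ξ := by
  have hL' : ContDiff ℝ 1 (deriv L) := hL.iterate_deriv' 1 1
  have hL₂ : support (deriv (deriv L)) ⊆ Icc 0 1 :=
    support_deriv_subset.trans (closure_minimal hL₁ isClosed_Icc)
  obtain ⟨M, hM⟩ := (hL.continuous_deriv one_le_two).bounded_above_of_compact_support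
    (.of_support_subset_isCompact isCompact_Icc hL₁)
  obtain ⟨K, hK⟩ := (hL'.continuous_deriv le_rfl).bounded_above_of_compact_support
    (.of_support_subset_isCompact isCompact_Icc hL₂)
  simp only [Real.norm_eq_abs] at hM hK
  have hglaeser := sq_deriv_le_of_nonneg (hL.differentiable two_ne_zero)
    (hL'.differentiable one_ne_zero) hK hL₀
  refine ⟨(M + 9 * K) * R ^ 2 + 1, by
    have := (abs_nonneg _).trans (hM 0); have := (abs_nonneg _).trans (hK 0); positivity,
    fun z ξ hz => ?_⟩
  rw [leviForm_eq hL]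
  set A := ‖z.1‖ ^ 2
  refine leviForm_terms_lower_bound (sq_nonneg _) (sq_nonneg _) (sq_nonneg _)
    (pow_le_pow_left₀ (norm_nonneg _) hz 2) (sq_nonneg _) (sq_nonneg _) ?_
    (sq_re_inner_mul_inner_le _ _ _ _) (hL₀ _) (hM _)
    ((abs_mul_le_abs_of_support_subset_Icc hL₂ A).trans (hK A)) ?_
  · rw [← mul_pow]
    exact pow_le_pow_left₀ (norm_nonneg _) (norm_inner_le_norm _ _) 2
  · calc deriv L A ^ 2 * A = |deriv L A| * (|deriv L A| * A) := by rw [← sq_abs]; ring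
      _ ≤ |deriv L A| * |deriv L A| := by
        gcongr; exact abs_mul_le_abs_of_support_subset_Icc hL₁ A
      _ = deriv L A ^ 2 := by rw [← sq, sq_abs]
      _ ≤ 4 * K * L A := hglaeser A

end LeviForm

theorem stmt_2_general (m : ℕ) (l : ℝ → ℝ)
    (hl : ContDiffOn ℝ (⊤ : ℕ∞) l (Set.Ici 0))
    (hrange : ∀ t : ℝ, 0 ≤ t → l t ∈ Set.Icc (0:ℝ) 1)
    (hsupp : ∀ t : ℝ, 0 ≤ t → (0 < l t ↔ t < 1))
    (hone : ∃ δ : ℝ, 0 < δ ∧ ∀ t ∈ Set.Ico (0:ℝ) δ, l t = 1) (R : ℝ) :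
    ∃ C : ℝ, 0 < C ∧ ∃ ε : ℝ, 0 < ε ∧
      (∀ z : ℂ × EuclideanSpace ℂ (Fin m), ‖z.2‖ < R →
        ∀ ξ : ℂ × EuclideanSpace ℂ (Fin m),
          ε * (‖ξ.1‖ ^ 2 + l (‖z.1‖ ^ 2) * ‖ξ.2‖ ^ 2) ≤
            leviForm (fun p => l (‖p.1‖ ^ 2) * ‖p.2‖ ^ 2 + C * ‖p.1‖ ^ 2) z ξ) ∧
      (∀ z : ℂ × EuclideanSpace ℂ (Fin m), ‖z.1‖ < 1 → ‖z.2‖ < R →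
        ∀ ξ : ℂ × EuclideanSpace ℂ (Fin m), ξ ≠ 0 →
          0 < leviForm (fun p => l (‖p.1‖ ^ 2) * ‖p.2‖ ^ 2 + C * ‖p.1‖ ^ 2) z ξ) := by
  obtain ⟨δ, hδ, hone⟩ := hone
  have hl₀ (t : ℝ) (ht : 0 ≤ t) : 0 ≤ l t := (hrange t ht).1
  have hl₁ (t : ℝ) (ht : 1 ≤ t) : l t = 0 := by
    have ht₀ : 0 ≤ t := zero_le_one.trans ht
    exact (hl₀ t ht₀).antisymm' (not_lt.1 fun h => ((hsupp t ht₀).1 h).not_ge ht)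
  obtain ⟨L, hL, hLl, hL₀, hL₁⟩ := exists_smooth_extension hl hl₀ hl₁ hδ hone
  obtain ⟨C, hC, hbound⟩ := exists_leviForm_lower_bound (E := ℂ) (F := EuclideanSpace ℂ (Fin m))
    (hL.of_le (by norm_cast)) hL₀ hL₁ R
  have hS : (fun p : ℂ × EuclideanSpace ℂ (Fin m) => l (‖p.1‖ ^ 2) * ‖p.2‖ ^ 2 + C * ‖p.1‖ ^ 2) =
      fun p => L (‖p.1‖ ^ 2) * ‖p.2‖ ^ 2 + C * ‖p.1‖ ^ 2 := by
    funext p; rw [hLl _ (sq_nonneg _)]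
  have hlower (z : ℂ × EuclideanSpace ℂ (Fin m)) (hz : ‖z.2‖ < R) (ξ) :
      1 / 2 * (‖ξ.1‖ ^ 2 + l (‖z.1‖ ^ 2) * ‖ξ.2‖ ^ 2) ≤
        leviForm (fun p => l (‖p.1‖ ^ 2) * ‖p.2‖ ^ 2 + C * ‖p.1‖ ^ 2) z ξ := by
    rw [hS, ← hLl _ (sq_nonneg _)]
    exact hbound z ξ hz.le
  refine ⟨C, hC, 1 / 2, one_half_pos, hlower, fun z hz₁ hz₂ ξ hξ => ?_⟩
  refine lt_of_lt_of_le ?_ (hlower z hz₂ ξ)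
  have hlz : 0 < l (‖z.1‖ ^ 2) :=
    (hsupp _ (sq_nonneg _)).2 (pow_lt_one₀ (norm_nonneg _) hz₁ two_ne_zero)
  rcases eq_or_ne ξ.1 0 with hξ₁ | hξ₁
  · have := norm_pos_iff.2 fun hξ₂ => hξ (Prod.ext hξ₁ hξ₂)
    positivity
  · have := norm_pos_iff.2 hξ₁
    positivity

theorem stmt_2 (m : ℕ) (l : ℝ → ℝ)
    (hl : ContDiffOn ℝ (⊤ : ℕ∞) l (Set.Ici 0))
    (hrange : ∀ t : ℝ, 0 ≤ t → l t ∈ Set.Icc (0:ℝ) 1)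
    (hsupp : ∀ t : ℝ, 0 ≤ t → (0 < l t ↔ t < 1))
    (hone : ∃ δ : ℝ, 0 < δ ∧ ∀ t ∈ Set.Ico (0:ℝ) δ, l t = 1) (R : ℝ) (hR : 0 < R) :
    ∃ C : ℝ, 0 < C ∧ ∃ ε : ℝ, 0 < ε ∧
      (∀ z : ℂ × EuclideanSpace ℂ (Fin m), ‖z.2‖ < R →
        ∀ ξ : ℂ × EuclideanSpace ℂ (Fin m),
          ε * (‖ξ.1‖ ^ 2 + l (‖z.1‖ ^ 2) * ‖ξ.2‖ ^ 2) ≤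
            leviForm (fun p => l (‖p.1‖ ^ 2) * ‖p.2‖ ^ 2 + C * ‖p.1‖ ^ 2) z ξ) ∧
      (∀ z : ℂ × EuclideanSpace ℂ (Fin m), ‖z.1‖ < 1 → ‖z.2‖ < R →
        ∀ ξ : ℂ × EuclideanSpace ℂ (Fin m), ξ ≠ 0 →
          0 < leviForm (fun p => l (‖p.1‖ ^ 2) * ‖p.2‖ ^ 2 + C * ‖p.1‖ ^ 2) z ξ) :=
  stmt_2_general m l hl hrange hsupp hone R
end

section
/- (Hopf lemma consequence) Let U ⊂ ℂ be an open neighborhood of the closed unit disc 𝔻̄ and let v be subharmonic on U with v < 1 on the open unit disc 𝔻 and v ≡ 1 on the unit circle b𝔻. Then there exists c > 0 such that v(z) ≤ 1 − c·dist(z, b𝔻) for all z ∈ 𝔻̄. -/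
open Complex Metric MeasureTheory Real Set

/-!
Compare `v` on the annulus `1/2 ≤ ‖z‖ ≤ 1` with the barrier
`h(z) = 1 + a (log ‖z‖ + (1 - ‖z‖²)/4)`. Since `log ‖·‖` is harmonic off `0` and `‖·‖²` has
Laplacian `4`, circle averages of `h` fall short of its centre value by `a r²/4`, so `v - h`
satisfies a strict sub-mean value inequality and cannot attain a positive maximum inside the
annulus. On the outer circle `v = 1 = h`; on the inner one `v ≤ 1 - a ≤ h` as soon as
`a ≤ 1 - max_{‖z‖ ≤ 1/2} v`, which is positive because the upper semicontinuous `v < 1` attains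
its maximum on that disc. Hence `v ≤ h` on the annulus, and `log ρ ≤ ρ - 1`,
`1 - ρ² ≤ 2 (1 - ρ)` give `h(z) ≤ 1 - (a/2)(1 - ‖z‖)`.
-/

open InnerProductSpace ComplexConjugate

theorem cAvg_eq_circleAverage (f : ℂ → ℝ) (z : ℂ) (r : ℝ) : cAvg f z r = circleAverage f z r :=
  rfl

theorem nonpos_of_lt_circleAverage {u : ℂ → ℝ} {K : Set ℂ} (hK : IsCompact K)
    (hu : UpperSemicontinuousOn u K)
    (h : ∀ z ∈ K, 0 < u z → ∃ r, sphere z |r| ⊆ K ∧ u z < circleAverage u z r) :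
    ∀ z ∈ K, u z ≤ 0 := by
  by_contra! ⟨z, hzK, hz⟩
  obtain ⟨z₀, hz₀K, hmax⟩ := hu.exists_isMaxOn ⟨z, hzK⟩ hK
  obtain ⟨r, hsphere, hlt⟩ := h z₀ hz₀K (hz.trans_le (hmax hzK))
  by_cases hint : CircleIntegrable u z₀ r
  · exact hlt.not_ge (circleAverage_mono_on_of_le_circle hint fun w hw => hmax (hsphere hw))
  · rw [circleAverage.integral_undef hint] at hlt
    exact hlt.not_gt (hz.trans_le (hmax hzK))

theorem circleAverage_log_norm {z : ℂ} {r : ℝ} (hr : |r| < ‖z‖) :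
    circleAverage (fun w => Real.log ‖w‖) z r = Real.log ‖z‖ := by
  refine InnerProductSpace.HarmonicOnNhd.circleAverage_eq fun w hw => ?_
  refine analyticAt_id.harmonicAt_log_norm ?_
  rintro rfl
  simp only [mem_closedBall, dist_zero_left] at hw
  linarith

theorem circleAverage_norm_sq (z : ℂ) (r : ℝ) :
    circleAverage (fun w => ‖w‖ ^ 2) z r = ‖z‖ ^ 2 + r ^ 2 := by
  set g : ℂ → ℝ := fun w => (conj z * (2 * w - z)).re
  have hexpand : ∀ w, ‖w‖ ^ 2 = g w + ‖w - z‖ ^ 2 := fun w => by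
    simp only [g, Complex.sq_norm, Complex.normSq_apply, mul_re, sub_re, sub_im, mul_im,
      conj_re, conj_im, re_ofNat, im_ofNat]
    ring
  have hsphere : EqOn (fun w => ‖w‖ ^ 2) (fun w => g w + r ^ 2) (sphere z |r|) := fun w hw => by
    show ‖w‖ ^ 2 = g w + r ^ 2
    rw [hexpand, ← dist_eq_norm, mem_sphere.mp hw, sq_abs]
  have hg : Continuous g := by fun_prop
  have hharm : HarmonicOnNhd g (closedBall z |r|) := fun w _ =>
    (analyticAt_const.mul ((analyticAt_const.mul analyticAt_id).sub analyticAt_const)).harmonicAt_re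
  rw [circleAverage_congr_sphere hsphere, circleAverage_fun_add hg.continuousOn.circleIntegrable'
    (circleIntegrable_const _ _ _), hharm.circleAverage_eq, circleAverage_const, hexpand z]
  simp

theorem sub_lt_circleAverage_sub {v h : ℂ → ℝ} {z : ℂ} {r : ℝ}
    (hv : v z ≤ circleAverage v z r) (hh : CircleIntegrable h z r)
    (havg : circleAverage h z r < h z) (hpos : 0 < h z) :
    v z - h z < circleAverage (v - h) z r := by
  by_cases hint : CircleIntegrable v z r
  · rw [circleAverage_sub hint hh]
    linarith
  · -- Both averages are then the junk value `0`, so `v z ≤ 0 < h z`.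
    have hint' : ¬CircleIntegrable (v - h) z r := fun hvh => hint (by simpa using hvh.add hh)
    rw [circleAverage.integral_undef hint] at hv
    rw [circleAverage.integral_undef hint']
    linarith

theorem circleAverage_const_add_mul_add_mul {f g : ℂ → ℝ} {c : ℂ} {R : ℝ}
    (hf : CircleIntegrable f c R) (hg : CircleIntegrable g c R) (α β γ : ℝ) :
    circleAverage (fun w => α + β * f w + γ * g w) c R
      = α + β * circleAverage f c R + γ * circleAverage g c R := by
  have hβf : CircleIntegrable (β • f) c R := hf.const_smul
  have hγg : CircleIntegrable (γ • g) c R := hg.const_smul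
  have hsum : (fun w => α + β * f w + γ * g w) = (fun _ => α) + β • f + γ • g := rfl
  rw [hsum, circleAverage_add ((circleIntegrable_const α c R).add hβf) hγg,
    circleAverage_add (circleIntegrable_const α c R) hβf, circleAverage_smul, circleAverage_smul,
    circleAverage_const, smul_eq_mul, smul_eq_mul]

noncomputable def hopfBarrier (a : ℝ) (w : ℂ) : ℝ :=
  1 + a * (Real.log ‖w‖ + (1 - ‖w‖ ^ 2) / 4)

section hopfBarrier

variable {a : ℝ} {w : ℂ}

theorem hopfBarrier_of_norm_eq_one (hw : ‖w‖ = 1) : hopfBarrier a w = 1 := by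
  simp [hopfBarrier, hw]

theorem continuousOn_hopfBarrier (a : ℝ) : ContinuousOn (hopfBarrier a) {0}ᶜ := by
  intro w hw
  unfold hopfBarrier
  fun_prop (disch := simp_all)

theorem circleAverage_hopfBarrier (a : ℝ) {z : ℂ} {r : ℝ} (hr : |r| < ‖z‖) :
    circleAverage (hopfBarrier a) z r = hopfBarrier a z - a / 4 * r ^ 2 := by
  have hlog : CircleIntegrable (fun w => Real.log ‖w‖) z r := by
    refine ContinuousOn.circleIntegrable' fun w hw => ?_
    have hw0 : ‖w‖ ≠ 0 := by
      rintro hw0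
      rw [norm_eq_zero.mp hw0, mem_sphere, dist_zero_left] at hw
      linarith
    exact ((Real.continuousAt_log hw0).comp continuous_norm.continuousAt).continuousWithinAt
  have hsq : CircleIntegrable (fun w => ‖w‖ ^ 2) z r :=
    (continuous_norm.pow 2).continuousOn.circleIntegrable'
  have hform : hopfBarrier a = fun w => (1 + a / 4) + a * Real.log ‖w‖ + (-a / 4) * ‖w‖ ^ 2 := by
    ext w
    unfold hopfBarrier
    ring
  rw [hform, circleAverage_const_add_mul_add_mul hlog hsq, circleAverage_log_norm hr,
    circleAverage_norm_sq, ← hform]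
  unfold hopfBarrier
  ring

theorem one_sub_le_hopfBarrier (ha : 0 ≤ a) (hw : 1 / 2 ≤ ‖w‖) (hw' : ‖w‖ ≤ 1) :
    1 - a ≤ hopfBarrier a w := by
  have hlog : -1 ≤ Real.log ‖w‖ := by
    calc -1 ≤ -Real.log 2 := by linarith [Real.log_two_lt_d9]
      _ = Real.log (1 / 2) := by rw [one_div, Real.log_inv]
      _ ≤ Real.log ‖w‖ := Real.log_le_log (by norm_num) hw
  have hsq : 0 ≤ 1 - ‖w‖ ^ 2 := by nlinarith [norm_nonneg w]
  unfold hopfBarrier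
  nlinarith

theorem hopfBarrier_le (ha : 0 ≤ a) (hw : 0 < ‖w‖) (hw' : ‖w‖ ≤ 1) :
    hopfBarrier a w ≤ 1 - a / 2 * (1 - ‖w‖) := by
  have hlog : Real.log ‖w‖ ≤ ‖w‖ - 1 := Real.log_le_sub_one_of_pos hw
  have hsq : 1 - ‖w‖ ^ 2 ≤ 2 * (1 - ‖w‖) := by nlinarith
  unfold hopfBarrier
  nlinarith

end hopfBarrier

theorem closedBall_subset_closedBall_diff_ball {E : Type*} [SeminormedAddCommGroup E] {z : E}
    {r ρ R : ℝ} (hρ : ρ + r ≤ ‖z‖) (hR : ‖z‖ + r ≤ R) :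
    closedBall z r ⊆ closedBall 0 R \ ball 0 ρ := by
  rw [subset_sdiff]
  constructor
  · exact closedBall_subset_closedBall' (by simpa [add_comm] using hR)
  · exact closedBall_disjoint_ball (by simpa [add_comm] using hρ)

theorem closedBall_diff_ball_subset_compl_zero {E : Type*} [SeminormedAddCommGroup E]
    {ρ R : ℝ} (hρ : 0 < ρ) : closedBall (0 : E) R \ ball 0 ρ ⊆ {0}ᶜ :=
  (sdiff_subset_compl _ _).trans
    (compl_subset_compl.mpr (singleton_subset_iff.mpr (mem_ball_self hρ)))

theorem exists_sub_hopfBarrier_lt_circleAverage {U : Set ℂ} {v : ℂ → ℝ} {a : ℝ}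
    (hDU : closedBall (0 : ℂ) 1 ⊆ U) (hv : SubharmonicOn v U) (ha : 0 < a) (ha' : a < 1)
    {z : ℂ} (hz : 1 / 2 < ‖z‖) (hz' : ‖z‖ < 1) :
    ∃ r, sphere z |r| ⊆ closedBall 0 1 \ ball 0 (1 / 2) ∧
      (v - hopfBarrier a) z < circleAverage (v - hopfBarrier a) z r := by
  set r := min (‖z‖ - 1 / 2) (1 - ‖z‖)
  have hr : 0 < r := lt_min (by linarith) (by linarith)
  have hrz : r + 1 / 2 ≤ ‖z‖ := by linarith [min_le_left (‖z‖ - 1 / 2) (1 - ‖z‖)]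
  have hball : closedBall z r ⊆ closedBall 0 1 \ ball 0 (1 / 2) :=
    closedBall_subset_closedBall_diff_ball (by linarith)
      (by linarith [min_le_right (‖z‖ - 1 / 2) (1 - ‖z‖)])
  have hsphere : sphere z |r| ⊆ closedBall 0 1 \ ball 0 (1 / 2) := by
    rw [abs_of_pos hr]
    exact sphere_subset_closedBall.trans hball
  refine ⟨r, hsphere, sub_lt_circleAverage_sub ?_ ?_ ?_ ?_⟩
  · rw [← cAvg_eq_circleAverage]
    exact hv.2 z (hDU (sdiff_subset (hball (mem_closedBall_self hr.le)))) r hr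
      (hball.trans (sdiff_subset.trans hDU))
  · exact ((continuousOn_hopfBarrier a).mono
      (hsphere.trans (closedBall_diff_ball_subset_compl_zero (by norm_num)))).circleIntegrable'
  · rw [circleAverage_hopfBarrier a (by rw [abs_of_pos hr]; linarith)]
    have : 0 < a / 4 * r ^ 2 := by positivity
    linarith
  · linarith [one_sub_le_hopfBarrier ha.le hz.le hz'.le]

theorem le_hopfBarrier_of_subharmonicOn {U : Set ℂ} {v : ℂ → ℝ} {a : ℝ}
    (hDU : closedBall (0 : ℂ) 1 ⊆ U) (hv : SubharmonicOn v U)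
    (hbd : ∀ z ∈ sphere (0 : ℂ) 1, v z = 1) (ha : 0 < a) (ha' : a < 1)
    (hinner : ∀ z ∈ sphere (0 : ℂ) (1 / 2), v z ≤ 1 - a) :
    ∀ z ∈ closedBall (0 : ℂ) 1 \ ball 0 (1 / 2), v z ≤ hopfBarrier a z := by
  set K := closedBall (0 : ℂ) 1 \ ball 0 (1 / 2)
  have husc : UpperSemicontinuousOn (v - hopfBarrier a) K :=
    (hv.1.mono (sdiff_subset.trans hDU)).add
      ((continuousOn_hopfBarrier a).neg.mono
        (closedBall_diff_ball_subset_compl_zero (by norm_num))).upperSemicontinuousOn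
  suffices ∀ z ∈ K, (v - hopfBarrier a) z ≤ 0 from fun z hz => sub_nonpos.mp (this z hz)
  refine nonpos_of_lt_circleAverage ((isCompact_closedBall 0 1).diff isOpen_ball) husc ?_
  rintro z ⟨hz1, hz2⟩ hpos
  rw [mem_closedBall, dist_zero_right] at hz1
  rw [mem_ball, dist_zero_right, not_lt] at hz2
  have hz1' : ‖z‖ < 1 := by
    refine hz1.lt_of_ne fun h1 => hpos.ne' ?_
    rw [Pi.sub_apply, hbd z (mem_sphere_zero_iff_norm.mpr h1), hopfBarrier_of_norm_eq_one h1,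
      sub_self]
  have hz2' : 1 / 2 < ‖z‖ := by
    refine hz2.lt_of_ne' fun h2 => hpos.not_ge ?_
    rw [Pi.sub_apply, sub_nonpos]
    exact (hinner z (mem_sphere_zero_iff_norm.mpr h2)).trans (one_sub_le_hopfBarrier ha.le hz2 hz1)
  exact exists_sub_hopfBarrier_lt_circleAverage hDU hv ha ha' hz2' hz1'

theorem stmt_11_general (U : Set ℂ) (hDU : closedBall (0:ℂ) 1 ⊆ U)
    (v : ℂ → ℝ) (hv : SubharmonicOn v U)
    (hlt : ∀ z ∈ ball (0:ℂ) 1, v z < 1)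
    (hbd : ∀ z ∈ sphere (0:ℂ) 1, v z = 1) :
    ∃ c : ℝ, 0 < c ∧ ∀ z ∈ closedBall (0:ℂ) 1, v z ≤ 1 - c * (1 - ‖z‖) := by
  have hB : closedBall (0 : ℂ) (1 / 2) ⊆ U := (closedBall_subset_closedBall (by norm_num)).trans hDU
  obtain ⟨p, hp, hpmax⟩ := (hv.1.mono hB).exists_isMaxOn ⟨0, mem_closedBall_self (by norm_num)⟩
    (isCompact_closedBall 0 (1 / 2))
  have hp1 : v p < 1 := hlt p (closedBall_subset_ball (by norm_num) hp)
  set a := min (1 - v p) (1 / 2)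
  have ha : 0 < a := lt_min (by linarith) (by norm_num)
  have ha' : a < 1 := (min_le_right _ _).trans_lt (by norm_num)
  have hinner : ∀ z ∈ closedBall (0 : ℂ) (1 / 2), v z ≤ 1 - a := fun z hz => by
    linarith [isMaxOn_iff.mp hpmax z hz, min_le_left (1 - v p) (1 / 2)]
  have hcomp := le_hopfBarrier_of_subharmonicOn hDU hv hbd ha ha' fun z hz =>
    hinner z (sphere_subset_closedBall hz)
  refine ⟨a / 2, by positivity, fun z hz => ?_⟩
  have hz1 : ‖z‖ ≤ 1 := mem_closedBall_zero_iff.mp hz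
  by_cases hz2 : ‖z‖ < 1 / 2
  · have : 0 ≤ a / 2 * ‖z‖ := by positivity
    linarith [hinner z (mem_closedBall_zero_iff.mpr hz2.le)]
  · rw [not_lt] at hz2
    calc v z ≤ hopfBarrier a z := hcomp z ⟨hz, by simpa using hz2⟩
      _ ≤ 1 - a / 2 * (1 - ‖z‖) := hopfBarrier_le ha.le (by linarith) hz1

theorem stmt_11 (U : Set ℂ) (hU : IsOpen U) (hDU : closedBall (0:ℂ) 1 ⊆ U)
    (v : ℂ → ℝ) (hv : SubharmonicOn v U)
    (hlt : ∀ z ∈ ball (0:ℂ) 1, v z < 1)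
    (hbd : ∀ z ∈ sphere (0:ℂ) 1, v z = 1) :
    ∃ c : ℝ, 0 < c ∧ ∀ z ∈ closedBall (0:ℂ) 1, v z ≤ 1 - c * (1 - ‖z‖) :=
  stmt_11_general U hDU v hv hlt hbd
end
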